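/- Let (X, μ) be a measure space, let d ≥ 1 be a natural number, let ℝ^d denote EuclideanSpace ℝ (Fin d) with Lebesgue measure, and let k, m be real numbers with 0 ≤ k < m. There exists a constant C > 0, depending only on d, m and k, such that for every measurable g : X × ℝ^d → ℝ and every G > 0 with 0 ≤ g(x, v) ≤ G for almost every (x, v), defining the local moments l_j(x) := ∫_{ℝ^d} ‖v‖^j g(x, v) dv, one has ‖l_k‖_{L^{(m+d)/(k+d)}(X, μ)} ≤ C · G^{(m−k)/(m+d)} · ‖l_m‖_{L^1(X, μ)}^{(k+d)/(m+d)}. -/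

import Mathlib

/-!
Fix `x` and write `f = g (x, ·)`, so `0 ≤ f ≤ G`. Splitting velocity space at radius `R`,
the ball contributes at most `G |B₁| R^(k+d)` and its complement at most `R^(k-m) l_m(x)`,
since there `‖v‖^k ≤ R^(k-m) ‖v‖^m`. The radius balancing the two terms gives
`l_k(x) ≤ C G^((m-k)/(m+d)) l_m(x)^((k+d)/(m+d))`; raising this to the power
`(m+d)/(k+d)` makes the right-hand side linear in `l_m(x)`, and integrating over `X` finishes.
-/

open MeasureTheory ENNReal Metric Module

theorem Real.mul_div_rpow_eq {x y : ℝ} (hx : 0 < x) (hy : 0 ≤ y) (t : ℝ) :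
    x * (y / x) ^ t = x ^ (1 - t) * y ^ t := by
  rw [Real.div_rpow hy hx.le, Real.rpow_sub hx, Real.rpow_one]
  field_simp

/-- `R = (M / A) ^ (a + b)⁻¹` is the radius at which `A R^a` and `M R^(-b)` are equal. -/
theorem Real.mul_rpow_add_mul_rpow_neg_eq {A M a b : ℝ} (hA : 0 < A) (hM : 0 < M)
    (hab : 0 < a + b) :
    A * ((M / A) ^ (a + b)⁻¹) ^ a + M * ((M / A) ^ (a + b)⁻¹) ^ (-b) =
      2 * A ^ (b / (a + b)) * M ^ (a / (a + b)) := by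
  have hMA : 0 ≤ M / A := (div_pos hM hA).le
  have hbal : ((M / A) ^ (a + b)⁻¹) ^ (-b) = (A / M) ^ (b / (a + b)) := by
    rw [← Real.rpow_mul hMA, show (a + b)⁻¹ * -b = -(b / (a + b)) by ring,
      Real.rpow_neg hMA, ← Real.inv_rpow hMA, inv_div]
  rw [← Real.rpow_mul hMA, hbal, Real.mul_div_rpow_eq hA hM.le,
    Real.mul_div_rpow_eq hM hA.le]
  have h1 : 1 - (a + b)⁻¹ * a = b / (a + b) := by field_simp; ring
  have h2 : 1 - b / (a + b) = a / (a + b) := by field_simp; ring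
  rw [h1, h2, inv_mul_eq_div]
  ring

theorem ENNReal.rpow_le_rpow_sub_mul_rpow {r x : ℝ≥0∞} {k m : ℝ} (hr : r ≠ 0) (hrx : r ≤ x)
    (hx : x ≠ ⊤) (hkm : k ≤ m) : x ^ k ≤ r ^ (k - m) * x ^ m := by
  have hx0 : x ≠ 0 := ne_bot_of_le_ne_bot hr hrx
  have hneg : k - m = -(m - k) := by ring
  calc x ^ k = x ^ (k - m) * x ^ m := by rw [← ENNReal.rpow_add _ _ hx0 hx, sub_add_cancel]
    _ ≤ r ^ (k - m) * x ^ m := by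
      gcongr ?_ * _
      rw [hneg, ENNReal.rpow_neg, ENNReal.rpow_neg]
      exact ENNReal.inv_le_inv.2 (ENNReal.rpow_le_rpow hrx (by linarith))

section

variable {E : Type*} [NormedAddCommGroup E] [MeasurableSpace E] [OpensMeasurableSpace E]

theorem setLIntegral_compl_ball_rpow_nnnorm_mul_le (μ : Measure E)
    {k m R : ℝ} (hkm : k ≤ m) (hR : 0 < R) (f : E → ℝ≥0∞) :
    ∫⁻ v in (ball 0 R)ᶜ, (‖v‖₊ : ℝ≥0∞) ^ k * f v ∂μ ≤
      ENNReal.ofReal R ^ (k - m) * ∫⁻ v, (‖v‖₊ : ℝ≥0∞) ^ m * f v ∂μ := by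
  calc ∫⁻ v in (ball 0 R)ᶜ, (‖v‖₊ : ℝ≥0∞) ^ k * f v ∂μ
      ≤ ∫⁻ v in (ball 0 R)ᶜ, ENNReal.ofReal R ^ (k - m) * ((‖v‖₊ : ℝ≥0∞) ^ m * f v) ∂μ := by
        refine setLIntegral_mono' measurableSet_ball.compl fun v hv ↦ ?_
        rw [Set.mem_compl_iff, mem_ball_zero_iff, not_lt] at hv
        rw [← mul_assoc]
        gcongr
        refine ENNReal.rpow_le_rpow_sub_mul_rpow (by simpa using hR) ?_ ENNReal.coe_ne_top hkm
        rw [← enorm_eq_nnnorm, ← ofReal_norm]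
        exact ENNReal.ofReal_le_ofReal hv
    _ ≤ ∫⁻ v, ENNReal.ofReal R ^ (k - m) * ((‖v‖₊ : ℝ≥0∞) ^ m * f v) ∂μ :=
        setLIntegral_le_lintegral _ _
    _ = ENNReal.ofReal R ^ (k - m) * ∫⁻ v, (‖v‖₊ : ℝ≥0∞) ^ m * f v ∂μ :=
        lintegral_const_mul' _ _ (ENNReal.rpow_ne_top_of_ne_zero (by simpa using hR) ofReal_ne_top)

theorem lintegral_rpow_nnnorm_mul_eq_zero (μ : Measure E) [NullSingletonClass μ] {k m : ℝ}
    {f : E → ℝ≥0∞} (hf : AEMeasurable f μ) (hm : ∫⁻ v, (‖v‖₊ : ℝ≥0∞) ^ m * f v ∂μ = 0) :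
    ∫⁻ v, (‖v‖₊ : ℝ≥0∞) ^ k * f v ∂μ = 0 := by
  have hmeas : AEMeasurable (fun v ↦ (‖v‖₊ : ℝ≥0∞) ^ m * f v) μ := by fun_prop
  have hzero := (lintegral_eq_zero_iff' hmeas).1 hm
  refine (lintegral_congr_ae ?_).trans lintegral_zero
  filter_upwards [hzero, Measure.ae_ne μ 0] with v hv hv0
  have hnorm : (‖v‖₊ : ℝ≥0∞) ^ m ≠ 0 := by simp [ENNReal.rpow_eq_zero_iff, hv0]
  simp [(mul_eq_zero.1 hv).resolve_left hnorm]

end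

section

variable {E : Type*} [NormedAddCommGroup E] [NormedSpace ℝ E] [FiniteDimensional ℝ E]
  [MeasurableSpace E] [BorelSpace E] (μ : Measure E) [μ.IsAddHaarMeasure]

theorem setLIntegral_ball_rpow_nnnorm_mul_le {k R : ℝ} (hk : 0 ≤ k) (hR : 0 < R)
    {f : E → ℝ≥0∞} {G : ℝ≥0∞} (hfG : ∀ᵐ v ∂μ, f v ≤ G) :
    ∫⁻ v in ball 0 R, (‖v‖₊ : ℝ≥0∞) ^ k * f v ∂μ ≤
      G * μ (ball 0 1) * ENNReal.ofReal R ^ (k + finrank ℝ E) := by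
  calc ∫⁻ v in ball 0 R, (‖v‖₊ : ℝ≥0∞) ^ k * f v ∂μ
      ≤ ∫⁻ _ in ball 0 R, ENNReal.ofReal R ^ k * G ∂μ := by
        refine lintegral_mono_ae ?_
        filter_upwards [ae_restrict_mem measurableSet_ball, ae_restrict_of_ae hfG] with v hv hvG
        rw [mem_ball_zero_iff] at hv
        gcongr
        rw [← enorm_eq_nnnorm, ← ofReal_norm]
        exact ENNReal.ofReal_le_ofReal hv.le
    _ = G * μ (ball 0 1) * ENNReal.ofReal R ^ (k + finrank ℝ E) := by
        rw [setLIntegral_const, Measure.addHaar_ball_of_pos μ 0 hR,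
          ENNReal.rpow_add _ _ (by simpa using hR) ofReal_ne_top, ENNReal.ofReal_pow hR.le,
          ENNReal.rpow_natCast]
        ring

theorem lintegral_rpow_nnnorm_mul_le_add {k m R : ℝ} (hk : 0 ≤ k) (hkm : k ≤ m) (hR : 0 < R)
    {f : E → ℝ≥0∞} {G : ℝ≥0∞} (hfG : ∀ᵐ v ∂μ, f v ≤ G) :
    ∫⁻ v, (‖v‖₊ : ℝ≥0∞) ^ k * f v ∂μ ≤
      G * μ (ball 0 1) * ENNReal.ofReal R ^ (k + finrank ℝ E) +
        ENNReal.ofReal R ^ (k - m) * ∫⁻ v, (‖v‖₊ : ℝ≥0∞) ^ m * f v ∂μ := by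
  rw [← lintegral_add_compl _ measurableSet_ball]
  exact add_le_add (setLIntegral_ball_rpow_nnnorm_mul_le μ hk hR hfG)
    (setLIntegral_compl_ball_rpow_nnnorm_mul_le μ hkm hR f)

theorem lintegral_rpow_nnnorm_mul_le_of_ae_le [Nontrivial E] {k m G : ℝ} (hk : 0 ≤ k) (hkm : k < m)
    (hG : 0 < G) {f : E → ℝ≥0∞} (hf : AEMeasurable f μ) (hfG : ∀ᵐ v ∂μ, f v ≤ ENNReal.ofReal G) :
    ∫⁻ v, (‖v‖₊ : ℝ≥0∞) ^ k * f v ∂μ ≤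
      ENNReal.ofReal (2 * (μ (ball 0 1)).toReal ^ ((m - k) / (m + finrank ℝ E)) *
          G ^ ((m - k) / (m + finrank ℝ E))) *
        (∫⁻ v, (‖v‖₊ : ℝ≥0∞) ^ m * f v ∂μ) ^ ((k + finrank ℝ E) / (m + finrank ℝ E)) := by
  set d : ℝ := (finrank ℝ E : ℝ)
  have hd : 0 < d := by simpa [d] using Module.finrank_pos (R := ℝ) (M := E)
  have hkd : 0 < k + d := by positivity
  have hmd : 0 < m + d := by linarith
  set M := ∫⁻ v, (‖v‖₊ : ℝ≥0∞) ^ m * f v ∂μ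
  set V := (μ (ball 0 1)).toReal
  have hV : 0 < V := ENNReal.toReal_pos (measure_ball_pos μ _ one_pos).ne' measure_ball_lt_top.ne
  have hC : 0 < 2 * V ^ ((m - k) / (m + d)) * G ^ ((m - k) / (m + d)) := by positivity
  rcases eq_or_ne M 0 with hM0 | hM0
  · rw [lintegral_rpow_nnnorm_mul_eq_zero μ hf hM0]
    exact zero_le
  rcases eq_or_ne M ⊤ with hMtop | hMtop
  · rw [hMtop, ENNReal.top_rpow_of_pos (div_pos hkd hmd),
      ENNReal.mul_top (ENNReal.ofReal_pos.2 hC).ne']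
    exact le_top
  have hM : 0 < M.toReal := ENNReal.toReal_pos hM0 hMtop
  have hsum : k + d + (m - k) = m + d := by ring
  set R := (M.toReal / (G * V)) ^ (k + d + (m - k))⁻¹
  have hR : 0 < R := by positivity
  calc ∫⁻ v, (‖v‖₊ : ℝ≥0∞) ^ k * f v ∂μ
      ≤ ENNReal.ofReal G * μ (ball 0 1) * ENNReal.ofReal R ^ (k + d) +
          ENNReal.ofReal R ^ (k - m) * M :=
        lintegral_rpow_nnnorm_mul_le_add μ hk hkm.le hR hfG
    _ = ENNReal.ofReal (G * V * R ^ (k + d) + M.toReal * R ^ (-(m - k))) := by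
        rw [ENNReal.ofReal_add (by positivity) (by positivity), ENNReal.ofReal_mul (by positivity),
          ENNReal.ofReal_mul (by positivity), ENNReal.ofReal_mul (by positivity),
          ENNReal.ofReal_toReal (measure_ball_lt_top).ne, ENNReal.ofReal_toReal hMtop,
          ENNReal.ofReal_rpow_of_pos hR, ENNReal.ofReal_rpow_of_pos hR, neg_sub]
        ring
    _ = ENNReal.ofReal (2 * (G * V) ^ ((m - k) / (m + d)) * M.toReal ^ ((k + d) / (m + d))) := by
        rw [Real.mul_rpow_add_mul_rpow_neg_eq (by positivity) hM (by linarith), hsum]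
    _ = _ := by
        rw [Real.mul_rpow hG.le hV.le, ENNReal.ofReal_mul (by positivity),
          ← ENNReal.ofReal_rpow_of_pos hM, ENNReal.ofReal_toReal hMtop]
        ring_nf

end

theorem lintegral_rpow_rpow_le_of_ae_le_mul_rpow {X : Type*} [MeasurableSpace X] {μ : Measure X}
    {F H : X → ℝ≥0∞} {A : ℝ≥0∞} (hA : A ≠ ⊤) {p e : ℝ} (hp : 0 < p) (hpe : p * e = 1)
    (h : ∀ᵐ x ∂μ, F x ≤ A * H x ^ e) :
    (∫⁻ x, F x ^ p ∂μ) ^ e ≤ A * (∫⁻ x, H x ∂μ) ^ e := by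
  have he : 0 < e := pos_of_mul_pos_right (hpe ▸ one_pos) hp.le
  have hFp : ∀ᵐ x ∂μ, F x ^ p ≤ A ^ p * H x := by
    filter_upwards [h] with x hx
    calc F x ^ p ≤ (A * H x ^ e) ^ p := ENNReal.rpow_le_rpow hx hp.le
      _ = A ^ p * H x := by
        rw [ENNReal.mul_rpow_of_nonneg _ _ hp.le, ← ENNReal.rpow_mul, mul_comm e, hpe,
          ENNReal.rpow_one]
  calc (∫⁻ x, F x ^ p ∂μ) ^ e ≤ (A ^ p * ∫⁻ x, H x ∂μ) ^ e := by
        rw [← lintegral_const_mul' _ _ (ENNReal.rpow_ne_top_of_nonneg hp.le hA)]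
        exact ENNReal.rpow_le_rpow (lintegral_mono_ae hFp) he.le
    _ = A * (∫⁻ x, H x ∂μ) ^ e := by
        rw [ENNReal.mul_rpow_of_nonneg _ _ he.le, ← ENNReal.rpow_mul, hpe, ENNReal.rpow_one]

/-- Interpolation of local velocity moments (Lemma 5.1):
`‖l_k‖_{L^{(m+d)/(k+d)}(X,μ)} ≤ C · G^{(m−k)/(m+d)} · ‖l_m‖_{L^1(X,μ)}^{(k+d)/(m+d)}`,
where `l_j x = ∫ ‖v‖^j g (x, v) dv`. -/
theorem local_moment_interpolation {X : Type*} [MeasurableSpace X] (μ : Measure X)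
    (d : ℕ) (hd : 1 ≤ d) (k m : ℝ) (hk : 0 ≤ k) (hkm : k < m) :
    ∃ C : ℝ, 0 < C ∧
      ∀ g : X × EuclideanSpace ℝ (Fin d) → ℝ, Measurable g →
      ∀ G : ℝ, 0 < G →
      (∀ᵐ p ∂(μ.prod (volume : Measure (EuclideanSpace ℝ (Fin d)))), 0 ≤ g p ∧ g p ≤ G) →
      (∫⁻ x, (∫⁻ v : EuclideanSpace ℝ (Fin d),
            (‖v‖₊ : ℝ≥0∞) ^ k * ENNReal.ofReal (g (x, v))) ^ ((m + d) / (k + d)) ∂μ) ^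
          ((k + d) / (m + d)) ≤
        ENNReal.ofReal (C * G ^ ((m - k) / (m + d))) *
          (∫⁻ x, (∫⁻ v : EuclideanSpace ℝ (Fin d),
              (‖v‖₊ : ℝ≥0∞) ^ m * ENNReal.ofReal (g (x, v))) ∂μ) ^ ((k + d) / (m + d)) := by
  have : NeZero d := ⟨by omega⟩
  have hdim : (finrank ℝ (EuclideanSpace ℝ (Fin d)) : ℝ) = d := by simp
  have hV : 0 < (volume (ball (0 : EuclideanSpace ℝ (Fin d)) 1)).toReal :=
    ENNReal.toReal_pos (measure_ball_pos _ _ one_pos).ne' measure_ball_lt_top.ne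
  refine ⟨2 * (volume (ball (0 : EuclideanSpace ℝ (Fin d)) 1)).toReal ^ ((m - k) / (m + d)),
    by positivity, fun g hg G hG hae ↦ ?_⟩
  have hkd : (0 : ℝ) < k + d := by positivity
  have hmd : (0 : ℝ) < m + d := by linarith
  refine lintegral_rpow_rpow_le_of_ae_le_mul_rpow ENNReal.ofReal_ne_top (div_pos hmd hkd)
    (by field_simp) ?_
  filter_upwards [Measure.ae_ae_of_ae_prod hae] with x hx
  have hpoint := lintegral_rpow_nnnorm_mul_le_of_ae_le volume hk hkm hG
    (f := fun v ↦ ENNReal.ofReal (g (x, v))) (by fun_prop)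
    (hx.mono fun v hv ↦ ENNReal.ofReal_le_ofReal hv.2)
  rwa [hdim] at hpoint
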